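/- arXiv:1711.00091 — 2 statements merged into one kernel-verified Lean document; each statement's English description precedes it below -/
import Mathlib

section
/- Let $V$ be a dual fusion frame of $W$ (i.e., $T_V\phi_{VW}T_W^* = I_{\mathcal{H}}$) and $W$ a dual of $V$. Then for every $U\in B(\mathcal{H})$ one can recover $U$ from its fusion Gram matrix: $T_W\,\mathcal{G}_{U,W,V}\,T_W^* S_W^{-1} = U$, where $\mathcal{G}_{U,W,V} = \phi_{WV}T_V^*UT_W$. -/
open scoped InnerProductSpace
open ContinuousLinearMap (adjoint)
set_option maxHeartbeats 1000000
set_option synthInstance.maxHeartbeats 400000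
noncomputable section

variable {H : Type*} [NormedAddCommGroup H] [InnerProductSpace ℂ H] [CompleteSpace H]
variable {ι : Type*} [Countable ι]

/-- The orthogonal projection onto a closed subspace, as an endomorphism of `H`. -/
noncomputable def projL (W : Submodule ℂ H) [CompleteSpace W] : H →L[ℂ] H :=
  W.subtypeL.comp (Submodule.orthogonalProjectionOnto W)

/-- `{(W i, ω i)}` is a fusion frame with bounds `A ≤ B`. -/
def IsFusionFrame (W : ι → Submodule ℂ H) [∀ i, CompleteSpace (W i)]
    (ω : ι → ℝ) (A B : ℝ) : Prop :=
  ∀ f : H, ∃ s : ℝ,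
    HasSum (fun i => (ω i) ^ 2 * ‖(Submodule.orthogonalProjectionOnto (W i) f : H)‖ ^ 2) s ∧
    A * ‖f‖ ^ 2 ≤ s ∧ s ≤ B * ‖f‖ ^ 2

/-- `{(W i, ω i)}` is a Bessel fusion sequence with bound `B`. -/
def IsBesselFusion (W : ι → Submodule ℂ H) [∀ i, CompleteSpace (W i)]
    (ω : ι → ℝ) (B : ℝ) : Prop :=
  ∀ f : H, ∃ s : ℝ,
    HasSum (fun i => (ω i) ^ 2 * ‖(Submodule.orthogonalProjectionOnto (W i) f : H)‖ ^ 2) s ∧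
    s ≤ B * ‖f‖ ^ 2

/-- `{(W i, ω i)}` is a fusion Riesz basis with bounds `C ≤ D`. -/
def IsFusionRieszBasisWith (W : ι → Submodule ℂ H) (ω : ι → ℝ) (C D : ℝ) : Prop :=
  (⨆ i, W i).topologicalClosure = ⊤ ∧ 0 < C ∧ C ≤ D ∧
  ∀ (J : Finset ι) (g : ∀ i, W i),
    C * ∑ j ∈ J, ‖(g j : H)‖ ^ 2 ≤ ‖∑ j ∈ J, ω j • ((g j : H))‖ ^ 2 ∧
    ‖∑ j ∈ J, ω j • ((g j : H))‖ ^ 2 ≤ D * ∑ j ∈ J, ‖(g j : H)‖ ^ 2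

/-- `{(W i, ω i)}` is a fusion Riesz basis. -/
def IsFusionRieszBasis (W : ι → Submodule ℂ H) (ω : ι → ℝ) : Prop :=
  ∃ C D : ℝ, IsFusionRieszBasisWith W ω C D

/-! The adjoint of a synthesis operator is the analysis operator, `(T_W^* f)_i = ω_i π_{W_i} f`,
so `T_W T_W^* = S_W`; after regrouping, the duality `T_W φ_{WV} T_V^* = I` leaves
`U S_W S_W⁻¹ = U`. -/

section Synthesis

variable {E : Type*} [NormedAddCommGroup E] [InnerProductSpace ℂ E]
  {ι : Type*} {W : ι → Submodule ℂ E} {ω : ι → ℝ} {T : lp (fun i => W i) 2 →L[ℂ] E}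

theorem synthesis_apply_lp_single [DecidableEq ι]
    (hT : ∀ g, HasSum (fun i => ω i • (g i : E)) (T g)) (i : ι) (x : W i) : T (lp.single 2 i x) = ω i • (x : E) := by
  refine ((hT _).unique (hasSum_single i fun j hj => ?_)).trans ?_
  · rw [lp.single_apply_ne (E := fun i => W i) 2 i x hj, ZeroMemClass.coe_zero, smul_zero]
  · rw [lp.single_apply_self]

variable [CompleteSpace E] [∀ i, CompleteSpace (W i)]

theorem adjoint_synthesis_apply (hT : ∀ g, HasSum (fun i => ω i • (g i : E)) (T g))
    (f : E) (i : ι) :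
    adjoint T f i = ω i • Submodule.orthogonalProjectionOnto (W i) f := by
  classical
  refine ext_inner_right ℂ fun x => ?_
  calc ⟪adjoint T f i, x⟫_ℂ
      = ⟪adjoint T f, lp.single 2 i x⟫_ℂ := by rw [lp.inner_single_right]
    _ = ⟪f, ω i • (x : E)⟫_ℂ := by
      rw [ContinuousLinearMap.adjoint_inner_left, synthesis_apply_lp_single hT]
    _ = ⟪ω i • Submodule.orthogonalProjectionOnto (W i) f, x⟫_ℂ := by
      simp only [RCLike.real_smul_eq_coe_smul (K := ℂ), inner_smul_left, inner_smul_right,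
        RCLike.conj_ofReal, Submodule.inner_orthogonalProjectionOnto_eq_of_mem_right]

theorem synthesis_comp_adjoint_eq (hT : ∀ g, HasSum (fun i => ω i • (g i : E)) (T g))
    {S : E →L[ℂ] E}
    (hS : ∀ f, HasSum (fun i => ω i ^ 2 • (Submodule.orthogonalProjectionOnto (W i) f : E)) (S f)) :
    T ∘L adjoint T = S := by
  ext f
  refine (hT (adjoint T f)).unique ?_
  convert hS f using 2 with i
  rw [adjoint_synthesis_apply hT, Submodule.coe_smul_of_tower, smul_smul, pow_two]

end Synthesis

theorem stmt10_general (W V : ι → Submodule ℂ H)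
    [∀ i, CompleteSpace (W i)] [∀ i, CompleteSpace (V i)]
    (ω : ι → ℝ)
    (U : H →L[ℂ] H)
    (TW : lp (fun i => ↥(W i)) 2 →L[ℂ] H)
    (hTW : ∀ f, HasSum (fun i => ω i • ((f i : H))) (TW f))
    (TV : lp (fun i => ↥(V i)) 2 →L[ℂ] H)
    (SW SWinv : H →L[ℂ] H)
    (hSW : ∀ f, HasSum (fun i => (ω i) ^ 2 • ((Submodule.orthogonalProjectionOnto (W i) f : H))) (SW f))
    (hSWinv : SW.comp SWinv = 1 ∧ SWinv.comp SW = 1)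
    (φWV : lp (fun i => ↥(V i)) 2 →L[ℂ] lp (fun i => ↥(W i)) 2)
    (hWdualV : TW ∘L φWV ∘L (adjoint TV) = 1) :
    TW ∘L (φWV ∘L (adjoint TV) ∘L U ∘L TW) ∘L (adjoint TW) ∘L SWinv = U := by
  calc TW ∘L (φWV ∘L (adjoint TV) ∘L U ∘L TW) ∘L (adjoint TW) ∘L SWinv
      = (TW ∘L φWV ∘L adjoint TV) ∘L U ∘L (TW ∘L adjoint TW) ∘L SWinv := by
        simp only [ContinuousLinearMap.comp_assoc]
    _ = U := by
      rw [hWdualV, synthesis_comp_adjoint_eq hTW hSW, hSWinv.1, ContinuousLinearMap.one_def,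
        ContinuousLinearMap.id_comp, ContinuousLinearMap.comp_id]

/-- if `V` and `W` are mutually dual fusion frames, then any `U ∈ B(H)` is
recovered from its Gram matrix: `T_W 𝒢_{U,W,V} T_W^* S_W⁻¹ = U`. -/
theorem stmt10 (W V : ι → Submodule ℂ H)
    [∀ i, CompleteSpace (W i)] [∀ i, CompleteSpace (V i)]
    (ω v : ι → ℝ) (hω : ∀ i, 0 < ω i) (hv : ∀ i, 0 < v i)
    (AW BW AV BV : ℝ) (hAW : 0 < AW) (hAV : 0 < AV)
    (hframeW : IsFusionFrame W ω AW BW) (hframeV : IsFusionFrame V v AV BV)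
    (U : H →L[ℂ] H)
    (TW : lp (fun i => ↥(W i)) 2 →L[ℂ] H)
    (hTW : ∀ f, HasSum (fun i => ω i • ((f i : H))) (TW f))
    (TV : lp (fun i => ↥(V i)) 2 →L[ℂ] H)
    (hTV : ∀ f, HasSum (fun i => v i • ((f i : H))) (TV f))
    (SW SWinv SV SVinv : H →L[ℂ] H)
    (hSW : ∀ f, HasSum (fun i => (ω i) ^ 2 • ((Submodule.orthogonalProjectionOnto (W i) f : H))) (SW f))
    (hSWinv : SW.comp SWinv = 1 ∧ SWinv.comp SW = 1)
    (hSV : ∀ f, HasSum (fun i => (v i) ^ 2 • ((Submodule.orthogonalProjectionOnto (V i) f : H))) (SV f))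
    (hSVinv : SV.comp SVinv = 1 ∧ SVinv.comp SV = 1)
    (φWV : lp (fun i => ↥(V i)) 2 →L[ℂ] lp (fun i => ↥(W i)) 2)
    (hφWV : ∀ f i, ((φWV f) i : H) = (Submodule.orthogonalProjectionOnto (W i) (SVinv ((f i : H))) : H))
    (φVW : lp (fun i => ↥(W i)) 2 →L[ℂ] lp (fun i => ↥(V i)) 2)
    (hφVW : ∀ f i, ((φVW f) i : H) = (Submodule.orthogonalProjectionOnto (V i) (SWinv ((f i : H))) : H))
    (hWdualV : TW ∘L φWV ∘L (adjoint TV) = 1)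
    (hVdualW : TV ∘L φVW ∘L (adjoint TW) = 1) :
    TW ∘L (φWV ∘L (adjoint TV) ∘L U ∘L TW) ∘L (adjoint TW) ∘L SWinv = U :=
  stmt10_general W V ω U TW hTW TV SW SWinv hSW hSWinv φWV hWdualV
end
end

section
/- Let $V$ be a dual fusion frame of $W$ in $\mathcal{H}$. Then the following are equivalent: (1) $V$ is a fusion Riesz basis; (2) $\mathcal{G}_{V,W} = \phi_{VW}T_W^*T_V$ equals the identity on $(\sum_{i\in I}\oplus V_i)_{\ell^2}$; (3) $\mathcal{G}_{V,W}$ has a left inverse. -/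
/-!
With `K = φ_{VW} T_W^*`, duality says `T_V K = 1`, so the Gram operator `G = K T_V` is idempotent.
An idempotent with a left inverse is the identity, which gives (3) ⇒ (2). Again by `T_V K = 1`,
`G = 1` exactly when `T_V` is injective. A Riesz basis has an injective synthesis operator, since
the lower Riesz bound passes from finite sums to all of `ℓ²`; conversely, if `K T_V = 1` then
`‖y‖ ≤ ‖K‖ ‖T_V y‖` is a lower Riesz bound, and completeness of `V` comes from the lower frame bound.
-/

open scoped InnerProductSpace
open ContinuousLinearMap (adjoint)
set_option maxHeartbeats 1000000
set_option synthInstance.maxHeartbeats 400000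
noncomputable section

variable {H : Type*} [NormedAddCommGroup H] [InnerProductSpace ℂ H] [CompleteSpace H]
variable {ι : Type*} [Countable ι]

section FusionRiesz

-- Fresh `ι` and `H`, so that `[Countable ι]` and `[CompleteSpace H]` are not pulled in.
variable {ι : Type*} {H : Type*} [NormedAddCommGroup H] [InnerProductSpace ℂ H]

theorem lp.norm_sum_single_sq {E : ι → Type*} [∀ i, NormedAddCommGroup (E i)] [DecidableEq ι]
    (f : ∀ i, E i) (s : Finset ι) :
    ‖∑ i ∈ s, lp.single 2 i (f i)‖ ^ 2 = ∑ i ∈ s, ‖f i‖ ^ 2 := by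
  simpa using lp.norm_sum_single (p := 2) (by norm_num) f s

theorem IsIdempotentElem.eq_one_of_mul_eq_one_left {M : Type*} [Monoid M] {a l : M}
    (ha : IsIdempotentElem a) (hl : l * a = 1) : a = 1 :=
  calc a = l * a * a := by rw [hl, one_mul]
    _ = 1 := by rw [ha.mul_mul_self, hl]

theorem ContinuousLinearMap.isIdempotentElem_comp_of_comp_eq_one {𝕜 E F : Type*}
    [NormedField 𝕜] [NormedAddCommGroup E] [NormedSpace 𝕜 E] [NormedAddCommGroup F]
    [NormedSpace 𝕜 F] {K : E →L[𝕜] F} {T : F →L[𝕜] E} (h : T ∘L K = 1) :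
    IsIdempotentElem (K ∘L T) :=
  ContinuousLinearMap.ext fun y => congrArg K (DFunLike.congr_fun h (T y))

theorem IsFusionFrame.topologicalClosure_iSup_eq_top [CompleteSpace H] {V : ι → Submodule ℂ H}
    [∀ i, CompleteSpace (V i)] {v : ι → ℝ} {A B : ℝ} (hV : IsFusionFrame V v A B) (hA : 0 < A) :
    (⨆ i, V i).topologicalClosure = ⊤ := by
  rw [Submodule.topologicalClosure_eq_top_iff, ← Submodule.iInf_orthogonal, Submodule.eq_bot_iff]
  intro f hf
  obtain ⟨s, hs, hAs, -⟩ := hV f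
  have hproj : ∀ i, Submodule.orthogonalProjectionOnto (V i) f = 0 := fun i =>
    Submodule.orthogonalProjectionOnto_eq_zero_iff.mpr ((Submodule.mem_iInf _).mp hf i)
  have hs0 : s = 0 := hs.unique (by simp [hproj])
  have : ‖f‖ ^ 2 ≤ 0 := by nlinarith [sq_nonneg ‖f‖]
  simpa using this

section Synthesis

variable {V : ι → Submodule ℂ H} {v : ι → ℝ} {T : lp (fun i => V i) 2 →L[ℂ] H}

theorem synthesis_single [DecidableEq ι] (hT : ∀ f, HasSum (fun i => v i • (f i : H)) (T f))
    (j : ι) (a : V j) : T (lp.single 2 j a) = v j • (a : H) := by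
  refine (hT _).unique ?_
  convert hasSum_ite_eq j (v j • (a : H)) using 2 with i
  by_cases hij : i = j
  · subst hij; simp
  · simp [hij]

theorem synthesis_sum_single [DecidableEq ι]
    (hT : ∀ f, HasSum (fun i => v i • (f i : H)) (T f)) (J : Finset ι) (g : ∀ i, V i) :
    T (∑ j ∈ J, lp.single 2 j (g j)) = ∑ j ∈ J, v j • (g j : H) := by
  simp only [map_sum, synthesis_single hT]

theorem IsFusionRieszBasisWith.sq_mul_norm_le_norm_synthesis {C D : ℝ}
    (hV : IsFusionRieszBasisWith V v C D) (hT : ∀ f, HasSum (fun i => v i • (f i : H)) (T f))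
    (y : lp (fun i => V i) 2) : C * ‖y‖ ^ 2 ≤ ‖T y‖ ^ 2 := by
  classical
  have hy := lp.hasSum_single (p := 2) (by norm_num) y
  refine le_of_tendsto_of_tendsto' ((hy.norm.pow 2).const_mul C)
    (((T.continuous.tendsto y).comp hy).norm.pow 2) fun J => ?_
  simp only [Function.comp_apply, lp.norm_sum_single_sq, synthesis_sum_single hT]
  exact (hV.2.2.2 J _).1

theorem IsFusionRieszBasis.injective_synthesis (hV : IsFusionRieszBasis V v)
    (hT : ∀ f, HasSum (fun i => v i • (f i : H)) (T f)) : Function.Injective T := by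
  obtain ⟨C, D, hCD⟩ := hV
  refine (injective_iff_map_eq_zero T).2 fun y hy => ?_
  have := hCD.sq_mul_norm_le_norm_synthesis hT y
  rw [hy, norm_zero] at this
  have : ‖y‖ ^ 2 ≤ 0 := by nlinarith [hCD.2.1, sq_nonneg ‖y‖]
  simpa using this

theorem isFusionRieszBasisWith_of_bounds [DecidableEq ι] {C D : ℝ}
    (hT : ∀ f, HasSum (fun i => v i • (f i : H)) (T f))
    (hdense : (⨆ i, V i).topologicalClosure = ⊤) (hC : 0 < C) (hCD : C ≤ D)
    (hbounds : ∀ y, C * ‖y‖ ^ 2 ≤ ‖T y‖ ^ 2 ∧ ‖T y‖ ^ 2 ≤ D * ‖y‖ ^ 2) :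
    IsFusionRieszBasisWith V v C D := by
  refine ⟨hdense, hC, hCD, fun J g => ?_⟩
  simpa only [lp.norm_sum_single_sq, synthesis_sum_single hT, Submodule.coe_norm] using
    hbounds (∑ j ∈ J, lp.single 2 j (g j))

theorem isFusionRieszBasis_of_comp_eq_one {K : H →L[ℂ] lp (fun i => V i) 2}
    (hT : ∀ f, HasSum (fun i => v i • (f i : H)) (T f))
    (hdense : (⨆ i, V i).topologicalClosure = ⊤) (hKT : K ∘L T = 1) :
    IsFusionRieszBasis V v := by
  classical
  have hC : 0 < (‖K‖ ^ 2 + 1)⁻¹ := by positivity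
  have hC1 : (‖K‖ ^ 2 + 1)⁻¹ ≤ 1 := inv_le_one_of_one_le₀ (by nlinarith [sq_nonneg ‖K‖])
  refine ⟨_, ‖T‖ ^ 2 + 1, isFusionRieszBasisWith_of_bounds hT hdense hC
    (by nlinarith [sq_nonneg ‖T‖]) fun y => ⟨?_, ?_⟩⟩
  · have hy : ‖y‖ ≤ ‖K‖ * ‖T y‖ := by
      simpa [← ContinuousLinearMap.comp_apply, hKT] using K.le_opNorm (T y)
    rw [inv_mul_le_iff₀ (by positivity)]
    nlinarith [norm_nonneg y, norm_nonneg (T y), norm_nonneg K]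
  · nlinarith [T.le_opNorm y, norm_nonneg y, norm_nonneg (T y), norm_nonneg T]

end Synthesis

end FusionRiesz

theorem stmt19_general (W V : ι → Submodule ℂ H)
    [∀ i, CompleteSpace (W i)] [∀ i, CompleteSpace (V i)]
    (v : ι → ℝ)
    (AV BV : ℝ) (hAV : 0 < AV)
    (hframeV : IsFusionFrame V v AV BV)
    (TW : lp (fun i => ↥(W i)) 2 →L[ℂ] H)
    (TV : lp (fun i => ↥(V i)) 2 →L[ℂ] H)
    (hTV : ∀ f, HasSum (fun i => v i • ((f i : H))) (TV f))
    (φVW : lp (fun i => ↥(W i)) 2 →L[ℂ] lp (fun i => ↥(V i)) 2)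
    (hdual : TV ∘L φVW ∘L (adjoint TW) = 1) :
    (IsFusionRieszBasis V v ↔ φVW ∘L (adjoint TW) ∘L TV = 1) ∧
    ((φVW ∘L (adjoint TW) ∘L TV = 1) ↔
      ∃ L : lp (fun i => ↥(V i)) 2 →L[ℂ] lp (fun i => ↥(V i)) 2, L ∘L (φVW ∘L (adjoint TW) ∘L TV) = 1) := by
  set K := φVW ∘L adjoint TW
  change TV ∘L K = 1 at hdual
  change (_ ↔ K ∘L TV = 1) ∧ (K ∘L TV = 1 ↔ ∃ L, L ∘L (K ∘L TV) = 1)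
  have hTK : Function.LeftInverse TV K := fun x => DFunLike.congr_fun hdual x
  refine ⟨⟨fun hV => ?_, isFusionRieszBasis_of_comp_eq_one hTV
    (hframeV.topologicalClosure_iSup_eq_top hAV)⟩, ⟨fun h => ⟨1, by rw [h]; rfl⟩, ?_⟩⟩
  · exact ContinuousLinearMap.ext (hTK.rightInverse_of_injective (hV.injective_synthesis hTV))
  · rintro ⟨L, hL⟩
    exact (ContinuousLinearMap.isIdempotentElem_comp_of_comp_eq_one hdual).eq_one_of_mul_eq_one_left hL

/-- if `V` is a dual fusion frame of `W`, TFAE: (1) `V` is a fusion Riesz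
basis; (2) `𝒢_{V,W} = φ_{VW} T_W^* T_V` is the identity; (3) `𝒢_{V,W}` has a left inverse. -/
theorem stmt19 (W V : ι → Submodule ℂ H)
    [∀ i, CompleteSpace (W i)] [∀ i, CompleteSpace (V i)]
    (ω v : ι → ℝ) (hω : ∀ i, 0 < ω i) (hv : ∀ i, 0 < v i)
    (AW BW AV BV : ℝ) (hAW : 0 < AW) (hAV : 0 < AV)
    (hframeW : IsFusionFrame W ω AW BW) (hframeV : IsFusionFrame V v AV BV)
    (TW : lp (fun i => ↥(W i)) 2 →L[ℂ] H)
    (hTW : ∀ f, HasSum (fun i => ω i • ((f i : H))) (TW f))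
    (TV : lp (fun i => ↥(V i)) 2 →L[ℂ] H)
    (hTV : ∀ f, HasSum (fun i => v i • ((f i : H))) (TV f))
    (SW SWinv : H →L[ℂ] H)
    (hSW : ∀ f, HasSum (fun i => (ω i) ^ 2 • ((Submodule.orthogonalProjectionOnto (W i) f : H))) (SW f))
    (hSWinv : SW.comp SWinv = 1 ∧ SWinv.comp SW = 1)
    (φVW : lp (fun i => ↥(W i)) 2 →L[ℂ] lp (fun i => ↥(V i)) 2)
    (hφVW : ∀ f i, ((φVW f) i : H) = (Submodule.orthogonalProjectionOnto (V i) (SWinv ((f i : H))) : H))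
    (hdual : TV ∘L φVW ∘L (adjoint TW) = 1) :
    (IsFusionRieszBasis V v ↔ φVW ∘L (adjoint TW) ∘L TV = 1) ∧
    ((φVW ∘L (adjoint TW) ∘L TV = 1) ↔
      ∃ L : lp (fun i => ↥(V i)) 2 →L[ℂ] lp (fun i => ↥(V i)) 2, L ∘L (φVW ∘L (adjoint TW) ∘L TV) = 1) :=
  stmt19_general W V v AV BV hAV hframeV TW TV hTV φVW hdual
end
end
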